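/- Every structured deterministic parity automaton can be transformed in polynomial time into a language-equivalent streamlined automaton on the same transition structure in which, moreover, the new color of each transition is less than or equal to its original color. -/

import Mathlib

open Classical

universe u v

/-- A deterministic parity automaton with transition-based acceptance. -/
structure DPA (Q : Type u) (A : Type v) where
  init : Q
  trans : Q → A → Q
  color : Q → A → ℕ

/-- A word (or a color sequence) hits value `c` infinitely often. -/
def InfOften (f : ℕ → ℕ) (c : ℕ) : Prop := ∀ N, ∃ n, N ≤ n ∧ f n = c

namespace DPA

variable {Q : Type u} {A : Type v}

/-- The unique run of a DPA from state `q` on infinite word `w`. -/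
def runFrom (M : DPA Q A) (q : Q) (w : ℕ → A) : ℕ → Q
  | 0 => q
  | n + 1 => M.trans (M.runFrom q w n) (w n)

/-- The color sequence of the run from `q` on `w`. -/
def colorsFrom (M : DPA Q A) (q : Q) (w : ℕ → A) (n : ℕ) : ℕ :=
  M.color (M.runFrom q w n) (w n)

/-- The dominating (least infinitely often occurring) color of the run from `q` on `w`. -/
noncomputable def domColorFrom (M : DPA Q A) (q : Q) (w : ℕ → A) : ℕ :=
  sInf {c | InfOften (M.colorsFrom q w) c}

/-- Parity acceptance from a state. -/
def acceptsFrom (M : DPA Q A) (q : Q) (w : ℕ → A) : Prop :=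
  Even (M.domColorFrom q w)

def langFrom (M : DPA Q A) (q : Q) : Set (ℕ → A) := {w | M.acceptsFrom q w}

def lang (M : DPA Q A) : Set (ℕ → A) := M.langFrom M.init

/-- Language equivalence of states. -/
def LangEquiv (M : DPA Q A) (q q' : Q) : Prop := M.langFrom q = M.langFrom q'

/-- Reachability in the transition structure. -/
def Reach (M : DPA Q A) : Q → Q → Prop :=
  Relation.ReflTransGen (fun a b => ∃ x, M.trans a x = b)

/-- A DPA is structured: all states reachable, and language-equivalent states are
mutually reachable (same maximal SCC). -/
def Structured (M : DPA Q A) : Prop :=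
  (∀ q, M.Reach M.init q) ∧
  ∀ q q', M.LangEquiv q q' → M.Reach q q' ∧ M.Reach q' q

noncomputable def maxColor (M : DPA Q A) [Fintype Q] [Fintype A] : ℕ :=
  Finset.univ.sup fun t : Q × A => M.color t.1 t.2

/-- Same transition structure, new coloring. -/
def recolor (M : DPA Q A) (c : Q × A → ℕ) : DPA Q A :=
  ⟨M.init, M.trans, fun q x => c (q, x)⟩

/-- Extension of the transition function to finite words. -/
def runList (M : DPA Q A) (q : Q) (u : List A) : Q := u.foldl M.trans q

end DPA

/-- A (nondeterministic) automaton with colored transitions; used as co-Büchi automaton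
(colors 1 = rejecting, 2 = accepting). -/
structure NCA (Q : Type u) (A : Type v) where
  inits : Set Q
  trans : Set (Q × A × Q × ℕ)

namespace NCA

variable {Q : Type u} {A : Type v}

def IsRun (N : NCA Q A) (w : ℕ → A) (ρ : ℕ → Q) (γ : ℕ → ℕ) : Prop :=
  ρ 0 ∈ N.inits ∧ ∀ n, (ρ n, w n, ρ (n + 1), γ n) ∈ N.trans

/-- Co-Büchi acceptance: some run takes rejecting transitions only finitely often,
i.e. from some point on only accepting (color 2) transitions. -/
def accepts (N : NCA Q A) (w : ℕ → A) : Prop :=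
  ∃ ρ γ, N.IsRun w ρ γ ∧ ∃ p, ∀ n, p ≤ n → γ n = 2

/-- A finite run prefix on a finite word. -/
def FinRunOn (N : NCA Q A) (xs : List A) (ρ : ℕ → Q) (γ : ℕ → ℕ) : Prop :=
  ρ 0 ∈ N.inits ∧ ∀ k (hk : k < xs.length), (ρ k, xs[k], ρ (k + 1), γ k) ∈ N.trans

end NCA

namespace DPA

variable {Q : Type u} {A : Type v}

/-- The co-Büchi automaton `A_i` derived from a DPA: transitions of color ≥ i become
accepting (2), those of color < i rejecting (1), plus rejecting transitions to every
state language-equivalent to the deterministic successor that is not already a target. -/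
def derived (M : DPA Q A) (i : ℕ) : NCA Q A where
  inits := {M.init}
  trans :=
    {t | ∃ q x, t = (q, x, M.trans q x, if i ≤ M.color q x then 2 else 1)} ∪
    {t | ∃ q x q'', q'' ≠ M.trans q x ∧ M.LangEquiv q'' (M.trans q x) ∧ t = (q, x, q'', 1)}

end DPA

/-- State of the streamlining procedure: remaining coloring graph (as set of transitions,
identified by source state and letter), current color assignment, and counter. -/
structure SState (Q : Type u) (A : Type v) where
  graph : Set (Q × A)
  col : Q × A → ℕ
  counter : ℕ

namespace DPA

variable {Q : Type u} {A : Type v}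

/-- Edge relation of the coloring graph `G`. -/
def edgeIn (M : DPA Q A) (G : Set (Q × A)) (a b : Q) : Prop :=
  ∃ x, (a, x) ∈ G ∧ M.trans a x = b

def reachIn (M : DPA Q A) (G : Set (Q × A)) : Q → Q → Prop :=
  Relation.ReflTransGen (M.edgeIn G)

def SameSCC (M : DPA Q A) (G : Set (Q × A)) (a b : Q) : Prop :=
  M.reachIn G a b ∧ M.reachIn G b a

/-- A transition is transient in `G` if it lies on no cycle of `G`. -/
def Transient (M : DPA Q A) (G : Set (Q × A)) (t : Q × A) : Prop :=
  ¬ M.reachIn G (M.trans t.1 t.2) t.1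

/-- The least color (under `col`) of transitions lying within the SCC of `q` in `G`. -/
noncomputable def sccMinCol (M : DPA Q A) (G : Set (Q × A)) (col : Q × A → ℕ) (q : Q) : ℕ :=
  sInf {c | ∃ p x, (p, x) ∈ G ∧ M.SameSCC G p q ∧ M.SameSCC G (M.trans p x) q ∧
    col (p, x) = c}

/-- One step of the streamlining procedure (Carton–Maceiras style):
recolor/remove transient transitions if any; otherwise recolor/remove minimal-color
transitions of SCCs whose minimal color has the counter's parity if any;
otherwise increment the counter. -/
noncomputable def streamStep (M : DPA Q A) (s : SState Q A) : SState Q A :=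
  if s.graph = ∅ then s
  else
    let T := {t ∈ s.graph | M.Transient s.graph t}
    if T ≠ ∅ then
      ⟨s.graph \ T, fun t => if t ∈ T then s.counter else s.col t, s.counter⟩
    else
      let R := {t ∈ s.graph | M.SameSCC s.graph t.1 (M.trans t.1 t.2) ∧
        s.col t = M.sccMinCol s.graph s.col t.1 ∧ s.col t % 2 = s.counter % 2}
      if R ≠ ∅ then
        ⟨s.graph \ R, fun t => if t ∈ R then s.counter else s.col t, s.counter⟩
      else ⟨s.graph, s.col, s.counter + 1⟩

/-- The streamlining procedure after `n` steps, starting from the full transition graph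
with the original colors and counter 0. -/
noncomputable def streamRun (M : DPA Q A) (n : ℕ) : SState Q A :=
  (M.streamStep)^[n] ⟨Set.univ, fun t => M.color t.1 t.2, 0⟩

/-- A co-run: follow the run for a finite prefix, then once jump to a language-equivalent
state and follow the deterministic transitions from there. -/
def IsCoRun (M : DPA Q A) (w : ℕ → A) (σ : ℕ → Q) : Prop :=
  ∃ p, 0 < p ∧ (∀ n, n < p → σ n = M.runFrom M.init w n) ∧
    M.LangEquiv (σ p) (M.runFrom M.init w p) ∧
    ∀ n, p ≤ n → σ (n + 1) = M.trans (σ n) (w n)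

/-- The dominating (least infinitely often occurring) color along a co-run. -/
noncomputable def coRunDom (M : DPA Q A) (w : ℕ → A) (σ : ℕ → Q) : ℕ :=
  sInf {c | InfOften (fun n => M.color (σ n) (w n)) c}

/-- An accepting SCC (for threshold color `i`): a nonempty state set with a nonempty set of
transitions of color ≥ i among them that is strongly connected. -/
def AccSCC (M : DPA Q A) (i : ℕ) (S : Set Q) (T : Set (Q × A)) : Prop :=
  S.Nonempty ∧ T.Nonempty ∧
  (∀ t ∈ T, t.1 ∈ S ∧ M.trans t.1 t.2 ∈ S ∧ i ≤ M.color t.1 t.2) ∧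
  ∀ q ∈ S, ∀ q' ∈ S,
    Relation.ReflTransGen (fun a b => ∃ x, (a, x) ∈ T ∧ M.trans a x = b) q q'

/-- Redirect the transition `(s, x)` to target `q'` instead. -/
noncomputable def redirect (M : DPA Q A) (s : Q) (x : A) (q' : Q) : DPA Q A :=
  ⟨M.init, fun a y => if a = s ∧ y = x then q' else M.trans a y, M.color⟩

end DPA

section Words

variable {A : Type v} [Inhabited A]

/-- Prepend a finite word to an infinite word. -/
def listApp (u : List A) (w : ℕ → A) : ℕ → A :=
  fun n => if n < u.length then u.getD n default else w (n - u.length)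

/-- The suffix language of `L` after the finite word `u`. -/
def suffixLang (L : Set (ℕ → A)) (u : List A) : Set (ℕ → A) :=
  {w | listApp u w ∈ L}

/-- `u` is suffix-language-invariant for `L` after `w`. -/
def SuffixInv (L : Set (ℕ → A)) (u w : List A) : Prop :=
  suffixLang L w = suffixLang L (w ++ u)

/-- The first `n` letters of an infinite word. -/
def prefixList (w : ℕ → A) (n : ℕ) : List A := (List.range n).map w

/-- The finite segment `w a, w (a+1), ..., w (b-1)` of an infinite word. -/
def seg (w : ℕ → A) (a b : ℕ) : List A := (List.range (b - a)).map fun k => w (a + k)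

/-- `w'` results from a suffix-language-invariant injection of finite words into `w`
at the positions in `J`: there is a monotone reindexing `f` of the letters of `w`, the
gaps occur only after positions in `J`, and each inserted segment is
suffix-language-invariant for `L` after the corresponding prefix of `w`. -/
def IsInj (L : Set (ℕ → A)) (w : ℕ → A) (J : Set ℕ) (w' : ℕ → A) : Prop :=
  ∃ f : ℕ → ℕ, f 0 = 0 ∧ (∀ n, w' (f n) = w n) ∧
    (∀ n, n ∉ J → f (n + 1) = f n + 1) ∧
    (∀ n, n ∈ J → f n < f (n + 1) ∧
      SuffixInv L (seg w' (f n + 1) (f (n + 1))) (prefixList w (n + 1)))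

/-- `w` is at home in color `i` for the language `L`. -/
def AtHome (L : Set (ℕ → A)) (i : ℕ) (w : ℕ → A) : Prop :=
  ∃ J : Set ℕ, J.Infinite ∧ ∀ w', IsInj L w J w' →
    (∃ i', ∃ _ : i' < i, AtHome L i' w') ∨
    ((w ∈ L ∧ w' ∈ L ∧ Even i) ∨ (w ∉ L ∧ w' ∉ L ∧ Odd i))
  termination_by i

/-- The natural color of `w` for `L`: the least color `w` is at home in. -/
noncomputable def naturalColor (L : Set (ℕ → A)) (w : ℕ → A) : ℕ :=
  sInf {i | AtHome L i w}

/-- The ultimately periodic word `u v^ω`. -/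
def upw (u v : List A) : ℕ → A :=
  fun n => if n < u.length then u.getD n default
           else v.getD ((n - u.length) % v.length) default

/-- Insert the finite word `u` immediately after position `j` of `w`. -/
def insertWord (w : ℕ → A) (j : ℕ) (u : List A) : ℕ → A :=
  fun n => if n ≤ j then w n
           else if n - (j + 1) < u.length then u.getD (n - (j + 1)) default
           else w (n - u.length)

end Words

/-!
Colors change only when a transition leaves the coloring graph, and then become the counter,
which never exceeds the original color of a transition still in the graph; each step removes a
transition or raises the counter, so the procedure stops within |Q|·|Σ| + maxColor + 1 steps.

The transitions a run takes infinitely often form a strongly connected set `I`, and the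
dominating color of the run is the least color on `I`. The first step removing a transition of
`I` sees all of `I` inside one SCC of the graph; as no transition of `I` is transient, it removes
a least-colored transition of `I`, whose color has the parity of the counter, and colors it by
the counter. The other transitions of `I` leave later, with colors at least the counter. So the
least color on `I` keeps its parity, and the run keeps its verdict.
-/

open Filter

theorem Nat.exists_lt_and_not_succ {P : ℕ → Prop} (h0 : P 0) {N : ℕ} (hN : ¬ P N) :
    ∃ j < N, P j ∧ ¬ P (j + 1) := by
  by_contra! h
  have : ∀ n ≤ N, P n := by
    intro n hn
    induction n with
    | zero => exact h0
    | succ n ih => exact h n (by omega) (ih (by omega))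
  exact hN (this N le_rfl)

theorem Nat.exists_le_of_measure_lt {p : ℕ → Prop} (μ : ℕ → ℕ)
    (h : ∀ n, ¬ p n → μ (n + 1) < μ n) : ∃ n ≤ μ 0, p n := by
  by_contra! hp
  have : ∀ n ≤ μ 0 + 1, n + μ n ≤ μ 0 := by
    intro n hn
    induction n with
    | zero => simp
    | succ n ih =>
      have := h n (hp n (by omega))
      have := ih (by omega)
      omega
  have := this (μ 0 + 1) le_rfl
  omega

theorem setOf_frequently_comp_eq_image {β γ : Type*} [Finite β] (x : ℕ → β) (h : β → γ) :
    {c | ∃ᶠ n in atTop, h (x n) = c} = h '' {b | ∃ᶠ n in atTop, x n = b} := by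
  ext c
  calc (∃ᶠ n in atTop, h (x n) = c) ↔ ∃ᶠ n in atTop, ∃ b, x n = b ∧ h b = c := by simp
    _ ↔ ∃ b, ∃ᶠ n in atTop, x n = b ∧ h b = c := frequently_exists
    _ ↔ ∃ b, (∃ᶠ n in atTop, x n = b) ∧ h b = c := by simp only [frequently_and_distrib_right]

namespace DPA

variable {Q : Type u} {A : Type v}

theorem reachIn_mono (M : DPA Q A) {G G' : Set (Q × A)} (h : G ⊆ G') {a b : Q}
    (hab : M.reachIn G a b) : M.reachIn G' a b :=
  Relation.ReflTransGen.mono (fun _ _ ⟨x, hx, he⟩ => ⟨x, h hx, he⟩) a b hab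

theorem reachIn_of_mem (M : DPA Q A) {G : Set (Q × A)} {t : Q × A} (ht : t ∈ G) :
    M.reachIn G t.1 (M.trans t.1 t.2) :=
  .single ⟨t.2, ht, rfl⟩

def IsStronglyConnected (M : DPA Q A) (I : Set (Q × A)) : Prop :=
  ∀ t ∈ I, ∀ t' ∈ I, M.reachIn I (M.trans t.1 t.2) t'.1

def infTrans (M : DPA Q A) (q : Q) (w : ℕ → A) : Set (Q × A) :=
  {t | ∃ᶠ n in atTop, (M.runFrom q w n, w n) = t}

theorem runFrom_recolor (M : DPA Q A) (c : Q × A → ℕ) (q : Q) (w : ℕ → A) :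
    (M.recolor c).runFrom q w = M.runFrom q w := by
  funext n
  induction n with
  | zero => rfl
  | succ n ih => exact congrArg (M.trans · (w n)) ih

theorem infTrans_recolor (M : DPA Q A) (c : Q × A → ℕ) (q : Q) (w : ℕ → A) :
    (M.recolor c).infTrans q w = M.infTrans q w := by
  simp only [infTrans, runFrom_recolor]

section Finite

variable [Finite Q] [Finite A]

theorem domColorFrom_eq_sInf_image (M : DPA Q A) (q : Q) (w : ℕ → A) :
    M.domColorFrom q w = sInf ((fun t : Q × A => M.color t.1 t.2) '' M.infTrans q w) := by
  simp only [domColorFrom, colorsFrom, InfOften, ← frequently_atTop]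
  exact congrArg sInf
    (setOf_frequently_comp_eq_image (fun n => (M.runFrom q w n, w n)) fun t => M.color t.1 t.2)

theorem infTrans_nonempty (M : DPA Q A) (q : Q) (w : ℕ → A) : (M.infTrans q w).Nonempty :=
  frequently_exists.mp (.of_forall fun _ => ⟨_, rfl⟩)

theorem eventually_mem_infTrans (M : DPA Q A) (q : Q) (w : ℕ → A) :
    ∀ᶠ n in atTop, (M.runFrom q w n, w n) ∈ M.infTrans q w := by
  have : ∀ t, ∀ᶠ n in atTop, t ∉ M.infTrans q w → (M.runFrom q w n, w n) ≠ t := fun t =>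
    if ht : t ∈ M.infTrans q w then .of_forall fun _ h => (h ht).elim
    else (not_frequently.mp ht).mono fun _ h _ => h
  filter_upwards [eventually_all.mpr this] with n hn
  by_contra h
  exact hn _ h rfl

theorem isStronglyConnected_infTrans (M : DPA Q A) (q : Q) (w : ℕ → A) :
    M.IsStronglyConnected (M.infTrans q w) := by
  obtain ⟨N, hN⟩ := eventually_atTop.mp (M.eventually_mem_infTrans q w)
  have path : ∀ a b, N ≤ a → a ≤ b →
      M.reachIn (M.infTrans q w) (M.runFrom q w a) (M.runFrom q w b) := by
    intro a b ha hab
    induction b, hab using Nat.le_induction with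
    | base => exact .refl
    | succ b hab ih => exact ih.tail ⟨w b, hN b (ha.trans hab), rfl⟩
  intro t ht t' ht'
  obtain ⟨m, hm, rfl⟩ := frequently_atTop.mp ht N
  obtain ⟨m', hm', rfl⟩ := frequently_atTop.mp ht' (m + 1)
  exact path (m + 1) m' (by omega) hm'

theorem langFrom_recolor_eq (M : DPA Q A) (c : Q × A → ℕ)
    (hc : ∀ I, I.Nonempty → M.IsStronglyConnected I →
      sInf (c '' I) % 2 = sInf ((fun t : Q × A => M.color t.1 t.2) '' I) % 2) (q : Q) :
    (M.recolor c).langFrom q = M.langFrom q := by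
  ext w
  have := hc _ (M.infTrans_nonempty q w) (M.isStronglyConnected_infTrans q w)
  simp only [langFrom, acceptsFrom, Set.mem_ofPred_eq, domColorFrom_eq_sInf_image,
    infTrans_recolor, Nat.even_iff]
  exact this ▸ Iff.rfl

end Finite

end DPA

namespace SState

variable {Q : Type u} {A : Type v}

/-- The instance argument, rather than classical decidability, lets the `if` inside `streamStep`
match `retire` up to unfolding (hence also the `abbrev`s below). -/
def retire (s : SState Q A) (D : Set (Q × A)) [DecidablePred (· ∈ D)] : SState Q A :=
  ⟨s.graph \ D, fun t => if t ∈ D then s.counter else s.col t, s.counter⟩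

theorem retire_col (s : SState Q A) (D : Set (Q × A)) [DecidablePred (· ∈ D)] (t : Q × A) :
    (s.retire D).col t = s.col t ∨ t ∈ D ∧ (s.retire D).col t = s.counter := by
  by_cases ht : t ∈ D
  · exact .inr ⟨ht, if_pos ht⟩
  · exact .inl (if_neg ht)

end SState

namespace DPA

variable {Q : Type u} {A : Type v}

abbrev transientPart (M : DPA Q A) (G : Set (Q × A)) : Set (Q × A) :=
  {t ∈ G | M.Transient G t}

abbrev minParityPart (M : DPA Q A) (s : SState Q A) : Set (Q × A) :=
  {t ∈ s.graph | M.SameSCC s.graph t.1 (M.trans t.1 t.2) ∧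
    s.col t = M.sccMinCol s.graph s.col t.1 ∧ s.col t % 2 = s.counter % 2}

theorem streamStep_cases (M : DPA Q A) (s : SState Q A) :
    s.graph = ∅ ∧ M.streamStep s = s ∨
    (M.transientPart s.graph).Nonempty ∧
      M.streamStep s = s.retire (M.transientPart s.graph) ∨
    M.transientPart s.graph = ∅ ∧ (M.minParityPart s).Nonempty ∧
      M.streamStep s = s.retire (M.minParityPart s) ∨
    s.graph.Nonempty ∧ M.transientPart s.graph = ∅ ∧ M.minParityPart s = ∅ ∧
      M.streamStep s = ⟨s.graph, s.col, s.counter + 1⟩ := by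
  by_cases hg : s.graph = ∅
  · exact .inl ⟨hg, if_pos hg⟩
  right
  have hstep : M.streamStep s = if M.transientPart s.graph ≠ ∅ then
      s.retire (M.transientPart s.graph) else if M.minParityPart s ≠ ∅ then
      s.retire (M.minParityPart s) else ⟨s.graph, s.col, s.counter + 1⟩ := by
    rw [streamStep, if_neg hg]
    rfl
  simp only [← Set.nonempty_iff_ne_empty] at hstep
  split_ifs at hstep with hT hR
  · exact .inl ⟨hT, hstep⟩
  · rw [Set.not_nonempty_iff_eq_empty] at hT
    exact .inr (.inl ⟨hT, hR, hstep⟩)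
  · rw [Set.not_nonempty_iff_eq_empty] at hT hR
    exact .inr (.inr ⟨Set.nonempty_iff_ne_empty.mpr hg, hT, hR, hstep⟩)

theorem streamStep_graph_subset (M : DPA Q A) (s : SState Q A) :
    (M.streamStep s).graph ⊆ s.graph := by
  rcases M.streamStep_cases s with ⟨-, h⟩ | ⟨-, h⟩ | ⟨-, -, h⟩ | ⟨-, -, -, h⟩ <;> rw [h]
  exacts [Set.sdiff_subset, Set.sdiff_subset]

theorem streamStep_counter_le (M : DPA Q A) (s : SState Q A) :
    s.counter ≤ (M.streamStep s).counter := by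
  rcases M.streamStep_cases s with ⟨-, h⟩ | ⟨-, h⟩ | ⟨-, -, h⟩ | ⟨-, -, -, h⟩ <;> rw [h]
  exacts [le_rfl, le_rfl, Nat.le_succ _]

theorem streamStep_col (M : DPA Q A) (s : SState Q A) (t : Q × A) :
    (M.streamStep s).col t = s.col t ∨ t ∈ s.graph ∧ (M.streamStep s).col t = s.counter := by
  rcases M.streamStep_cases s with ⟨-, h⟩ | ⟨-, h⟩ | ⟨-, -, h⟩ | ⟨-, -, -, h⟩ <;> rw [h]
  · exact .inl rfl
  · exact (s.retire_col _ t).imp_right fun h => ⟨h.1.1, h.2⟩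
  · exact (s.retire_col _ t).imp_right fun h => ⟨h.1.1, h.2⟩
  · exact .inl rfl

theorem SameSCC.symm {M : DPA Q A} {G : Set (Q × A)} {a b : Q} (h : M.SameSCC G a b) :
    M.SameSCC G b a :=
  ⟨h.2, h.1⟩

theorem SameSCC.trans {M : DPA Q A} {G : Set (Q × A)} {a b c : Q} (h : M.SameSCC G a b)
    (h' : M.SameSCC G b c) : M.SameSCC G a c :=
  ⟨h.1.trans h'.1, h'.2.trans h.2⟩

theorem SameSCC.mono {M : DPA Q A} {G G' : Set (Q × A)} (hG : G ⊆ G') {a b : Q}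
    (h : M.SameSCC G a b) : M.SameSCC G' a b :=
  ⟨M.reachIn_mono hG h.1, M.reachIn_mono hG h.2⟩

theorem sameSCC_refl (M : DPA Q A) (G : Set (Q × A)) (a : Q) : M.SameSCC G a a :=
  ⟨.refl, .refl⟩

theorem IsStronglyConnected.sameSCC {M : DPA Q A} {I : Set (Q × A)}
    (hI : M.IsStronglyConnected I) {t t' : Q × A} (ht : t ∈ I) (ht' : t' ∈ I) :
    M.SameSCC I t.1 t'.1 ∧ M.SameSCC I (M.trans t.1 t.2) t'.1 :=
  ⟨⟨(M.reachIn_of_mem ht).trans (hI t ht t' ht'),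
      (M.reachIn_of_mem ht').trans (hI t' ht' t ht)⟩,
    ⟨hI t ht t' ht', ((M.reachIn_of_mem ht').trans (hI t' ht' t ht)).trans
      (M.reachIn_of_mem ht)⟩⟩

theorem sccMinCol_le (M : DPA Q A) {G : Set (Q × A)} (col : Q × A → ℕ) {p q : Q} {x : A}
    (hpx : (p, x) ∈ G) (hp : M.SameSCC G p q) (hpx' : M.SameSCC G (M.trans p x) q) :
    M.sccMinCol G col q ≤ col (p, x) :=
  Nat.sInf_le ⟨p, x, hpx, hp, hpx', rfl⟩

theorem exists_col_eq_sccMinCol (M : DPA Q A) {G : Set (Q × A)} (col : Q × A → ℕ) {p q : Q}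
    {x : A} (hpx : (p, x) ∈ G) (hp : M.SameSCC G p q) (hpx' : M.SameSCC G (M.trans p x) q) :
    ∃ p x, (p, x) ∈ G ∧ M.SameSCC G p q ∧ M.SameSCC G (M.trans p x) q ∧
      col (p, x) = M.sccMinCol G col q :=
  Nat.sInf_mem (s := {c | ∃ p x, (p, x) ∈ G ∧ M.SameSCC G p q ∧ M.SameSCC G (M.trans p x) q ∧
    col (p, x) = c}) ⟨_, p, x, hpx, hp, hpx', rfl⟩

theorem sccMinCol_congr (M : DPA Q A) {G : Set (Q × A)} (col : Q × A → ℕ) {a b : Q}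
    (h : M.SameSCC G a b) : M.sccMinCol G col a = M.sccMinCol G col b := by
  unfold sccMinCol
  congr 1
  ext c
  constructor <;> rintro ⟨p, x, hpx, hp, hpx', rfl⟩
  exacts [⟨p, x, hpx, hp.trans h, hpx'.trans h, rfl⟩,
    ⟨p, x, hpx, hp.trans h.symm, hpx'.trans h.symm, rfl⟩]

/-- A transition of the SCC of `t` attains its least color, which is the counter. -/
theorem minParityPart_nonempty (M : DPA Q A) {s : SState Q A}
    (hlow : ∀ t ∈ s.graph, s.counter ≤ s.col t) {t : Q × A} (ht : t ∈ s.graph)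
    (hcyc : ¬ M.Transient s.graph t) (hcol : s.col t = s.counter) :
    (M.minParityPart s).Nonempty := by
  have hscc : M.SameSCC s.graph (M.trans t.1 t.2) t.1 :=
    ⟨not_not.mp hcyc, M.reachIn_of_mem ht⟩
  obtain ⟨p, x, hpx, hp, hpx', hmin⟩ :=
    M.exists_col_eq_sccMinCol s.col ht (M.sameSCC_refl _ t.1) hscc
  have hle : M.sccMinCol s.graph s.col t.1 ≤ s.col t :=
    M.sccMinCol_le s.col ht (M.sameSCC_refl _ t.1) hscc
  have hpx_col : s.col (p, x) = s.counter := le_antisymm (by omega) (hlow _ hpx)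
  exact ⟨(p, x), hpx, hp.trans hpx'.symm, hmin.trans (M.sccMinCol_congr s.col hp).symm,
    by rw [hpx_col]⟩

def StreamInv (M : DPA Q A) (s : SState Q A) : Prop :=
  ∀ t ∈ s.graph, s.col t = M.color t.1 t.2 ∧ s.counter ≤ s.col t

theorem StreamInv.retire {M : DPA Q A} {s : SState Q A} (hs : M.StreamInv s)
    (D : Set (Q × A)) [DecidablePred (· ∈ D)] : M.StreamInv (s.retire D) := fun t ht => by
  have hcol : (s.retire D).col t = s.col t := if_neg ht.2
  rw [hcol]
  exact hs t ht.1

theorem StreamInv.streamStep {M : DPA Q A} {s : SState Q A} (hs : M.StreamInv s) :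
    M.StreamInv (M.streamStep s) := by
  rcases M.streamStep_cases s with ⟨-, h⟩ | ⟨-, h⟩ | ⟨-, -, h⟩ | ⟨-, hT, hR, h⟩ <;> rw [h]
  · exact hs
  · exact hs.retire _
  · exact hs.retire _
  intro t ht
  refine ⟨(hs t ht).1, Nat.lt_of_le_of_ne (hs t ht).2 fun hcol => ?_⟩
  have hcyc : ¬ M.Transient s.graph t := fun htr => hT.subset ⟨ht, htr⟩
  exact (M.minParityPart_nonempty (fun t ht => (hs t ht).2) ht hcyc hcol.symm).ne_empty hR

theorem mem_minParityPart_of_not_mem_streamStep (M : DPA Q A) {s : SState Q A} {t : Q × A}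
    (ht : t ∈ s.graph) (ht' : t ∉ (M.streamStep s).graph) (hcyc : ¬ M.Transient s.graph t) :
    t ∈ M.minParityPart s ∧ (M.streamStep s).col t = s.counter := by
  rcases M.streamStep_cases s with ⟨-, h⟩ | ⟨-, h⟩ | ⟨-, -, h⟩ | ⟨-, -, -, h⟩ <;>
    rw [h] at ht' ⊢
  · exact (ht' ht).elim
  · exact (hcyc (not_not.mp fun h => ht' ⟨ht, h⟩).2).elim
  · have hR : t ∈ M.minParityPart s := not_not.mp fun h => ht' ⟨ht, h⟩
    exact ⟨hR, if_pos hR⟩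
  · exact (ht' ht).elim

theorem streamRun_succ (M : DPA Q A) (n : ℕ) :
    M.streamRun (n + 1) = M.streamStep (M.streamRun n) :=
  Function.iterate_succ_apply' _ _ _

theorem streamInv_streamRun (M : DPA Q A) (n : ℕ) : M.StreamInv (M.streamRun n) := by
  induction n with
  | zero => exact fun _ _ => ⟨rfl, Nat.zero_le _⟩
  | succ n ih => exact M.streamRun_succ n ▸ ih.streamStep

theorem antitone_streamRun_graph (M : DPA Q A) : Antitone fun n => (M.streamRun n).graph :=
  antitone_nat_of_succ_le fun n => M.streamRun_succ n ▸ M.streamStep_graph_subset _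

theorem monotone_streamRun_counter (M : DPA Q A) : Monotone fun n => (M.streamRun n).counter :=
  monotone_nat_of_le_succ fun n => M.streamRun_succ n ▸ M.streamStep_counter_le _

theorem streamRun_col_le (M : DPA Q A) (n : ℕ) (t : Q × A) :
    (M.streamRun n).col t ≤ M.color t.1 t.2 := by
  induction n with
  | zero => exact le_rfl
  | succ n ih =>
    rw [streamRun_succ]
    rcases M.streamStep_col (M.streamRun n) t with h | ⟨ht, h⟩ <;> rw [h]
    · exact ih
    · exact (M.streamInv_streamRun n t ht).2.trans ih

theorem counter_le_streamRun_col (M : DPA Q A) {m n : ℕ} {t : Q × A}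
    (ht : t ∈ (M.streamRun m).graph) (hmn : m ≤ n) :
    (M.streamRun m).counter ≤ (M.streamRun n).col t := by
  induction n, hmn using Nat.le_induction with
  | base => exact (M.streamInv_streamRun m t ht).2
  | succ n hmn ih =>
    rw [streamRun_succ]
    rcases M.streamStep_col (M.streamRun n) t with h | ⟨-, h⟩ <;> rw [h]
    · exact ih
    · exact M.monotone_streamRun_counter hmn

theorem streamRun_col_eq_of_not_mem (M : DPA Q A) {m n : ℕ} {t : Q × A}
    (ht : t ∉ (M.streamRun m).graph) (hmn : m ≤ n) :
    (M.streamRun n).col t = (M.streamRun m).col t := by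
  induction n, hmn using Nat.le_induction with
  | base => rfl
  | succ n hmn ih =>
    rw [streamRun_succ]
    rcases M.streamStep_col (M.streamRun n) t with h | ⟨ht', -⟩
    · exact h.trans ih
    · exact (ht (M.antitone_streamRun_graph hmn ht')).elim

theorem sInf_image_streamRun_col_mod_two (M : DPA Q A) {N : ℕ}
    (hN : (M.streamRun N).graph = ∅) {I : Set (Q × A)} (hI : I.Nonempty)
    (hsc : M.IsStronglyConnected I) :
    sInf ((M.streamRun N).col '' I) % 2 =
      sInf ((fun t : Q × A => M.color t.1 t.2) '' I) % 2 := by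
  obtain ⟨j, hjN, hIj, hIj'⟩ :=
    Nat.exists_lt_and_not_succ (P := fun n => I ⊆ (M.streamRun n).graph) (Set.subset_univ I)
      (by rw [hN, Set.subset_empty_iff]; exact hI.ne_empty)
  obtain ⟨t₀, ht₀, ht₀'⟩ := Set.not_subset.mp hIj'
  set s := M.streamRun j
  have hinv := M.streamInv_streamRun j
  have hcyc : ¬ M.Transient s.graph t₀ := not_not.mpr (M.reachIn_mono hIj (hsc t₀ ht₀ t₀ ht₀))
  rw [streamRun_succ] at ht₀'
  obtain ⟨⟨-, -, hmin, hpar⟩, hcol⟩ :=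
    M.mem_minParityPart_of_not_mem_streamStep (hIj ht₀) ht₀' hcyc
  have hold : sInf ((fun t : Q × A => M.color t.1 t.2) '' I) = s.col t₀ := by
    refine IsLeast.csInf_eq ⟨⟨t₀, ht₀, (hinv t₀ (hIj ht₀)).1.symm⟩, ?_⟩
    rintro _ ⟨t, ht, rfl⟩
    obtain ⟨h₁, h₂⟩ := hsc.sameSCC ht ht₀
    show s.col t₀ ≤ M.color t.1 t.2
    rw [hmin, ← (hinv t (hIj ht)).1]
    exact M.sccMinCol_le s.col (hIj ht) (h₁.mono hIj) (h₂.mono hIj)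
  have hnew : sInf ((M.streamRun N).col '' I) = s.counter := by
    refine IsLeast.csInf_eq ⟨⟨t₀, ht₀, ?_⟩, ?_⟩
    · rw [M.streamRun_col_eq_of_not_mem (m := j + 1) (M.streamRun_succ j ▸ ht₀') hjN,
        streamRun_succ, hcol]
    · rintro _ ⟨t, ht, rfl⟩
      exact M.counter_le_streamRun_col (hIj ht) hjN.le
  rw [hnew, hold, hpar]

theorem lang_recolor_streamRun [Finite Q] [Finite A] (M : DPA Q A) {N : ℕ}
    (hN : (M.streamRun N).graph = ∅) :
    (M.recolor (M.streamRun N).col).lang = M.lang :=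
  M.langFrom_recolor_eq _ (fun _ hI hsc => M.sInf_image_streamRun_col_mod_two hN hI hsc) M.init

section Fintype

variable [Fintype Q] [Fintype A]

theorem StreamInv.counter_le_maxColor {M : DPA Q A} {s : SState Q A} (hs : M.StreamInv s)
    {t : Q × A} (ht : t ∈ s.graph) : s.counter ≤ M.maxColor :=
  calc s.counter ≤ s.col t := (hs t ht).2
    _ = M.color t.1 t.2 := (hs t ht).1
    _ ≤ M.maxColor := Finset.le_sup (f := fun t : Q × A => M.color t.1 t.2) (Finset.mem_univ t)

noncomputable def streamMeasure (M : DPA Q A) (s : SState Q A) : ℕ :=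
  s.graph.ncard + (M.maxColor + 1 - s.counter)

theorem streamMeasure_streamStep_lt {M : DPA Q A} {s : SState Q A} (hs : M.StreamInv s)
    (hg : s.graph.Nonempty) : M.streamMeasure (M.streamStep s) < M.streamMeasure s := by
  obtain ⟨t, ht⟩ := hg
  have hcounter := hs.counter_le_maxColor ht
  have retire_lt : ∀ D : Set (Q × A), D ⊆ s.graph → D.Nonempty →
      (s.graph \ D).ncard < s.graph.ncard := fun D hD hne =>
    Set.ncard_lt_ncard (hD.sdiff_ssubset_of_nonempty hne)
  unfold streamMeasure
  rcases M.streamStep_cases s with ⟨hg, -⟩ | ⟨hT, h⟩ | ⟨-, hR, h⟩ | ⟨-, -, -, h⟩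
  · rw [hg] at ht
    exact ht.elim
  · rw [h]
    exact Nat.add_lt_add_right (retire_lt _ (Set.sep_subset _ _) hT) _
  · rw [h]
    exact Nat.add_lt_add_right (retire_lt _ (Set.sep_subset _ _) hR) _
  · rw [h]
    dsimp only
    omega

theorem exists_streamRun_graph_eq_empty (M : DPA Q A) :
    ∃ n ≤ Fintype.card Q * Fintype.card A + M.maxColor + 1, (M.streamRun n).graph = ∅ := by
  have hμ₀ : M.streamMeasure (M.streamRun 0) =
      Fintype.card Q * Fintype.card A + M.maxColor + 1 := by
    simp [streamMeasure, streamRun, Set.ncard_univ, Nat.card_eq_fintype_card, add_assoc]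
  rw [← hμ₀]
  refine Nat.exists_le_of_measure_lt (fun n => M.streamMeasure (M.streamRun n)) fun n hn => ?_
  rw [streamRun_succ]
  exact streamMeasure_streamStep_lt (M.streamInv_streamRun n) (Set.nonempty_iff_ne_empty.mpr hn)

end Fintype

end DPA

theorem streamlining_polytime_equiv_general {Q : Type u} {A : Type v} [Fintype Q] [Fintype A]
    (M : DPA Q A) :
    ∃ n, n ≤ Fintype.card Q * Fintype.card A + M.maxColor + 2 ∧
      (M.streamRun n).graph = ∅ ∧
      (∀ t : Q × A, (M.streamRun n).col t ≤ M.color t.1 t.2) ∧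
      (M.recolor (M.streamRun n).col).lang = M.lang := by
  obtain ⟨n, hn, hempty⟩ := M.exists_streamRun_graph_eq_empty
  exact ⟨n, by omega, hempty, M.streamRun_col_le n, M.lang_recolor_streamRun hempty⟩

/-- Every structured DPA can be transformed (in polynomially many steps of
the streamlining procedure) into a language-equivalent streamlined automaton on the same
transition structure whose colors are pointwise at most the original ones. -/
theorem streamlining_polytime_equiv {Q : Type u} {A : Type v} [Fintype Q] [Fintype A]
    (M : DPA Q A) (hM : M.Structured) :
    ∃ n, n ≤ Fintype.card Q * Fintype.card A + M.maxColor + 2 ∧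
      (M.streamRun n).graph = ∅ ∧
      (∀ t : Q × A, (M.streamRun n).col t ≤ M.color t.1 t.2) ∧
      (M.recolor (M.streamRun n).col).lang = M.lang :=
  streamlining_polytime_equiv_general M
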